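/- arXiv:2012.04117 — 5 statements merged into one kernel-verified Lean document; each statement's English description precedes it below -/
import Mathlib

section
/- The local dampening mechanism M_LD, which outputs r ∈ R with probability proportional to exp(ε · D_{u,δ^u}(x,r) / 2), satisfies ε-differential privacy whenever δ^u is admissible: for any neighboring databases x, y and any output r, Pr[M_LD(x) = r] ≤ exp(ε) · Pr[M_LD(y) = r]. -/
/-!
Changing one record moves every score `ε * Df x r / 2` by at most `ε / 2`. Hence the weight
`exp (ε * Df x r / 2)` of `r` grows by at most `exp (ε / 2)` and the normalizing sum shrinks by
at most the same factor, so the probability of `r` changes by at most `exp ε`.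
-/

open Real Finset

section ExpWeights

variable {ι : Type*} [Fintype ι] {f g : ι → ℝ} {c : ℝ}

lemma sum_exp_le_exp_mul_sum_exp (h : ∀ i, f i ≤ c + g i) :
    ∑ i, exp (f i) ≤ exp c * ∑ i, exp (g i) := by
  rw [mul_sum]
  gcongr with i
  rw [← exp_add]
  exact exp_le_exp.2 (h i)

lemma exp_div_sum_exp_le_exp_two_mul (h : ∀ i, |f i - g i| ≤ c) (i : ι) :
    exp (f i) / ∑ j, exp (f j) ≤ exp (2 * c) * (exp (g i) / ∑ j, exp (g j)) := by
  have hf : ∀ j, f j ≤ c + g j := fun j => by linarith [(abs_le.1 (h j)).2]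
  have hg : ∀ j, g j ≤ c + f j := fun j => by linarith [(abs_le.1 (h j)).1]
  have hSg : 0 < ∑ j, exp (g j) := sum_pos (fun j _ => exp_pos _) ⟨i, mem_univ i⟩
  have hnum : exp (f i) ≤ exp c * exp (g i) := by
    rw [← exp_add]
    exact exp_le_exp.2 (hf i)
  rw [div_le_iff₀ (sum_pos (fun j _ => exp_pos _) ⟨i, mem_univ i⟩)]
  calc exp (f i)
      ≤ exp c * exp (g i) / (∑ j, exp (g j)) * ∑ j, exp (g j) := by
        rwa [div_mul_cancel₀ _ hSg.ne']
    _ ≤ exp c * exp (g i) / (∑ j, exp (g j)) * (exp c * ∑ j, exp (f j)) := by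
        gcongr
        exact sum_exp_le_exp_mul_sum_exp hg
    _ = exp (2 * c) * (exp (g i) / ∑ j, exp (g j)) * ∑ j, exp (f j) := by
        rw [two_mul, exp_add]
        ring

end ExpWeights

theorem local_dampening_dp_general {D R : Type*} [DecidableEq D] [Fintype R] {n : ℕ}
    (ε : ℝ) (hε : 0 ≤ ε) (Df : (Fin n → D) → R → ℝ)
    (hlip : ∀ x y : Fin n → D, hammingDist x y ≤ 1 → ∀ r : R, |Df x r - Df y r| ≤ 1) :
    ∀ x y : Fin n → D, hammingDist x y ≤ 1 → ∀ r : R,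
      Real.exp (ε * Df x r / 2) / ∑ r' : R, Real.exp (ε * Df x r' / 2) ≤
      Real.exp ε *
        (Real.exp (ε * Df y r / 2) / ∑ r' : R, Real.exp (ε * Df y r' / 2)) := by
  intro x y hxy r
  have hscore : ∀ r', |ε * Df x r' / 2 - ε * Df y r' / 2| ≤ ε / 2 := fun r' => by
    rw [← sub_div, ← mul_sub, abs_div, abs_mul, abs_of_nonneg hε, abs_two]
    gcongr
    exact mul_le_of_le_one_right hε (hlip x y hxy r')
  simpa only [mul_div_cancel₀ ε two_ne_zero] using exp_div_sum_exp_le_exp_two_mul hscore r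

/-- The local dampening mechanism (exponential weights over a 1-Lipschitz dampened
utility) satisfies ε-differential privacy. -/
theorem local_dampening_dp {D R : Type*} [DecidableEq D] [Fintype R] [Nonempty R] {n : ℕ}
    (ε : ℝ) (hε : 0 ≤ ε) (Df : (Fin n → D) → R → ℝ)
    (hlip : ∀ x y : Fin n → D, hammingDist x y ≤ 1 → ∀ r : R, |Df x r - Df y r| ≤ 1) :
    ∀ x y : Fin n → D, hammingDist x y ≤ 1 → ∀ r : R,
      Real.exp (ε * Df x r / 2) / ∑ r' : R, Real.exp (ε * Df x r' / 2) ≤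
      Real.exp ε *
        (Real.exp (ε * Df y r / 2) / ∑ r' : R, Real.exp (ε * Df y r' / 2)) :=
  local_dampening_dp_general ε hε Df hlip
end

section
/- Any mechanism that outputs r ∈ R with probability proportional to exp(ε·f(x,r)/2), where f satisfies the bounded-difference property |f(x,r) − f(y,r)| ≤ 1 for all neighboring databases x,y and all r, satisfies ε-differential privacy; in particular Pr[M(x)=r]/Pr[M(y)=r] ∈ [exp(−ε), exp(ε)]. -/
/-!
Exponentiating scores that differ by at most `c` changes each weight by a factor of at most
`exp c`, so both the numerator and the normalizing sum of an output probability move by at most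
`exp c`; the probability itself therefore moves by at most `exp (2 * c)`. With scores
`ε * f x r / 2` and `c = ε / 2` this is the factor `exp ε` of differential privacy.
-/

open Real Finset

lemma sum_exp_le_exp_mul_sum_exp_s6 {R : Type*} (s : Finset R) (u v : R → ℝ) (c : ℝ)
    (h : ∀ r ∈ s, v r ≤ u r + c) :
    ∑ r ∈ s, exp (v r) ≤ exp c * ∑ r ∈ s, exp (u r) := by
  rw [mul_sum]
  refine sum_le_sum fun r hr => ?_
  rw [← exp_add, exp_le_exp]
  linarith [h r hr]

lemma exp_div_sum_exp_le_of_abs_sub_le {R : Type*} [Fintype R] (u v : R → ℝ) (c : ℝ)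
    (h : ∀ r, |u r - v r| ≤ c) (r : R) :
    exp (u r) / ∑ r', exp (u r') ≤ exp (2 * c) * (exp (v r) / ∑ r', exp (v r')) := by
  have hne : (univ : Finset R).Nonempty := ⟨r, mem_univ r⟩
  have hSu : 0 < ∑ r', exp (u r') := sum_pos (fun _ _ => exp_pos _) hne
  have hSv : 0 < ∑ r', exp (v r') := sum_pos (fun _ _ => exp_pos _) hne
  have hnum : exp (u r) ≤ exp c * exp (v r) := by
    rw [← exp_add, exp_le_exp]
    linarith [(abs_le.mp (h r)).2]
  have hsum : ∑ r', exp (v r') ≤ exp c * ∑ r', exp (u r') :=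
    sum_exp_le_exp_mul_sum_exp_s6 _ u v c fun r' _ => by linarith [(abs_le.mp (h r')).1]
  rw [← mul_div_assoc, div_le_div_iff₀ hSu hSv]
  calc exp (u r) * ∑ r', exp (v r')
      ≤ (exp c * exp (v r)) * (exp c * ∑ r', exp (u r')) := by gcongr
    _ = exp (2 * c) * exp (v r) * ∑ r', exp (u r') := by
      rw [two_mul, exp_add]
      ring

lemma abs_half_mul_sub_half_mul_le {ε a b : ℝ} (hε : 0 ≤ ε) (hab : |a - b| ≤ 1) :
    |ε * a / 2 - ε * b / 2| ≤ ε / 2 := by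
  rw [← sub_div, ← mul_sub, abs_div, abs_mul, abs_of_nonneg hε, abs_two]
  gcongr
  exact mul_le_of_le_one_right hε hab

theorem exp_weights_dp_general {D R : Type*} [DecidableEq D] [Fintype R] {n : ℕ}
    (ε : ℝ) (hε : 0 ≤ ε) (f : (Fin n → D) → R → ℝ)
    (hbd : ∀ x y : Fin n → D, hammingDist x y ≤ 1 → ∀ r : R, |f x r - f y r| ≤ 1) :
    ∀ x y : Fin n → D, hammingDist x y ≤ 1 → ∀ r : R,
      Real.exp (-ε) *
          (Real.exp (ε * f y r / 2) / ∑ r' : R, Real.exp (ε * f y r' / 2)) ≤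
        Real.exp (ε * f x r / 2) / ∑ r' : R, Real.exp (ε * f x r' / 2) ∧
      Real.exp (ε * f x r / 2) / ∑ r' : R, Real.exp (ε * f x r' / 2) ≤
        Real.exp ε *
          (Real.exp (ε * f y r / 2) / ∑ r' : R, Real.exp (ε * f y r' / 2)) := by
  have upper : ∀ x y : Fin n → D, hammingDist x y ≤ 1 → ∀ r : R,
      exp (ε * f x r / 2) / ∑ r', exp (ε * f x r' / 2) ≤
        exp ε * (exp (ε * f y r / 2) / ∑ r', exp (ε * f y r' / 2)) := fun x y hxy r => by
    simpa only [mul_div_cancel₀ ε two_ne_zero] using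
      exp_div_sum_exp_le_of_abs_sub_le _ _ (ε / 2)
        (fun r' => abs_half_mul_sub_half_mul_le hε (hbd x y hxy r')) r
  intro x y hxy r
  refine ⟨?_, upper x y hxy r⟩
  rw [exp_neg, inv_mul_le_iff₀ (exp_pos ε)]
  exact upper y x (hammingDist_comm x y ▸ hxy) r

/-- Any exponential-weights mechanism over a score function with bounded differences
between neighboring databases satisfies ε-differential privacy, with the probability
ratio lying in `[exp(−ε), exp(ε)]`. -/
theorem exp_weights_dp {D R : Type*} [DecidableEq D] [Fintype R] [Nonempty R] {n : ℕ}
    (ε : ℝ) (hε : 0 ≤ ε) (f : (Fin n → D) → R → ℝ)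
    (hbd : ∀ x y : Fin n → D, hammingDist x y ≤ 1 → ∀ r : R, |f x r - f y r| ≤ 1) :
    ∀ x y : Fin n → D, hammingDist x y ≤ 1 → ∀ r : R,
      Real.exp (-ε) *
          (Real.exp (ε * f y r / 2) / ∑ r' : R, Real.exp (ε * f y r' / 2)) ≤
        Real.exp (ε * f x r / 2) / ∑ r' : R, Real.exp (ε * f x r' / 2) ∧
      Real.exp (ε * f x r / 2) / ∑ r' : R, Real.exp (ε * f x r' / 2) ≤
        Real.exp ε *
          (Real.exp (ε * f y r / 2) / ∑ r' : R, Real.exp (ε * f y r' / 2)) :=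
  exp_weights_dp_general ε hε f hbd
end

section
/- Let δ^u be an admissible and bounded sensitivity function (δ^u(x,t,r) = Δu for all t ≥ n), with u^s(x,r) = u(x,r) − s the shifted utility. Define s₀ = n·Δu + max_{r'∈R} u(x,r'). Then for every s ≥ s₀ and every r ∈ R, the normalized exponential weights coincide: exp(ε·D_{u^s,δ^u}(x,r)/2) / Σ_{r'} exp(ε·D_{u^s,δ^u}(x,r')/2) = exp(ε·D_{u^{s₀},δ^u}(x,r)/2) / Σ_{r'} exp(ε·D_{u^{s₀},δ^u}(x,r')/2). Consequently the limit as s → ∞ of these probabilities exists and equals the value at s₀. -/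
/-! Admissibility makes `δ x · r` monotone in the distance, so the breakpoint of index `-n` is at
least `-n·Δu`. Hence for `s ≥ s₀` the value `u x r - s` lies below that breakpoint for every
output, where all gaps between breakpoints equal `Δu` and the interpolation is affine in `s` with
slope `-1/Δu`, independently of `r`. Subtracting the same constant from every exponent does not
change the normalised weights, so they are constant on `[s₀, ∞)`, which also gives the limit. -/

open Filter Topology

/-- Element local sensitivity at distance `t`. -/
noncomputable def LSE {D R : Type*} [DecidableEq D] {n : ℕ}
    (u : (Fin n → D) → R → ℝ) (x : Fin n → D) (t : ℕ) (r : R) : ℝ :=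
  ⨆ y : {y : Fin n → D // hammingDist x y ≤ t},
    ⨆ z : {z : Fin n → D // hammingDist y.1 z ≤ 1}, |u y.1 r - u z.1 r|

/-- A sensitivity function is admissible. -/
def Admissible {D R : Type*} [DecidableEq D] {n : ℕ}
    (u : (Fin n → D) → R → ℝ) (δ : (Fin n → D) → ℕ → R → ℝ) : Prop :=
  (∀ (x : Fin n → D) (r : R), LSE u x 0 r ≤ δ x 0 r) ∧
  (∀ x y : Fin n → D, hammingDist x y ≤ 1 → ∀ (t : ℕ) (r : R), δ y t r ≤ δ x (t + 1) r)

/-- Breakpoints of the dampening function. -/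
noncomputable def bkpt {X R : Type*} (δ : X → ℕ → R → ℝ) (x : X) (i : ℤ) (r : R) : ℝ :=
  if 0 ≤ i then ∑ j ∈ Finset.range i.toNat, δ x j r
  else -∑ j ∈ Finset.range (-i).toNat, δ x j r

open Finset

lemma interp_eq_of_affine_tail {b : ℤ → ℝ} {c : ℝ} {m : ℤ} (hb : StrictMono b)
    (htail : ∀ i ≤ m, b i = b m + (i - m) * c) {v : ℝ} (hv : v ≤ b m) {i : ℤ}
    (hi : b i ≤ v) :
    (v - b i) / (b (i + 1) - b i) + i = (v - b m) / c + m := by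
  have him : i ≤ m := hb.le_iff_le.mp (hi.trans hv)
  rcases him.eq_or_lt with rfl | him
  · rw [le_antisymm hv hi]
    simp
  have hgap : b (i + 1) - b i = c := by
    rw [htail i him.le, htail (i + 1) him]
    push_cast
    ring
  have hc : c ≠ 0 := hgap ▸ (sub_pos.mpr (hb (lt_add_one i))).ne'
  rw [hgap, htail i him.le]
  field_simp
  ring

lemma exp_add_div_sum_exp_add {ι : Type*} [Fintype ι] (f : ι → ℝ) (c : ℝ) (i : ι) :
    Real.exp (f i + c) / ∑ j, Real.exp (f j + c) = Real.exp (f i) / ∑ j, Real.exp (f j) := by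
  simp only [Real.exp_add, ← Finset.sum_mul]
  exact mul_div_mul_right _ _ (Real.exp_ne_zero c)

lemma Admissible.monotone {D R : Type*} [DecidableEq D] {n : ℕ}
    {u : (Fin n → D) → R → ℝ} {δ : (Fin n → D) → ℕ → R → ℝ} (h : Admissible u δ)
    (x : Fin n → D) (r : R) : Monotone fun t => δ x t r :=
  monotone_nat_of_le_succ fun t => h.2 x x (by simp) t r

namespace bkpt

variable {X R : Type*} {δ : X → ℕ → R → ℝ} {x : X} {r : R}

lemma natCast (m : ℕ) : bkpt δ x m r = ∑ j ∈ range m, δ x j r := by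
  simp [bkpt]

lemma neg_natCast (m : ℕ) : bkpt δ x (-m) r = -∑ j ∈ range m, δ x j r := by
  cases m <;> simp [bkpt]; omega

lemma lt_add_one (hpos : ∀ t, 0 < δ x t r) (i : ℤ) : bkpt δ x i r < bkpt δ x (i + 1) r := by
  obtain ⟨m, rfl | rfl⟩ := i.eq_nat_or_neg
  · rw [← Nat.cast_add_one, natCast, natCast, sum_range_succ]
    linarith [hpos m]
  · cases m with
    | zero => simpa [bkpt] using hpos 0
    | succ k =>
      rw [show -((k + 1 : ℕ) : ℤ) + 1 = -(k : ℤ) by push_cast; ring, neg_natCast, neg_natCast,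
        sum_range_succ]
      linarith [hpos k]

lemma strictMono (hpos : ∀ t, 0 < δ x t r) : StrictMono fun i => bkpt δ x i r :=
  strictMono_int_of_lt_succ (lt_add_one hpos)

lemma eq_of_le_neg {n : ℕ} {c : ℝ} (hconst : ∀ t, n ≤ t → δ x t r = c) {i : ℤ}
    (hi : i ≤ -n) : bkpt δ x i r = bkpt δ x (-n) r + ((i : ℝ) + n) * c := by
  obtain ⟨m, rfl⟩ : ∃ m : ℕ, i = -m := ⟨(-i).toNat, by omega⟩
  have hnm : n ≤ m := by omega
  induction m, hnm using Nat.le_induction with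
  | base => simp
  | succ m hnm ih =>
    rw [neg_natCast, sum_range_succ, hconst m hnm, neg_add, ← neg_natCast, ih (by omega)]
    push_cast
    ring

lemma neg_mul_le_neg_natCast (hmono : Monotone fun t => δ x t r) (m : ℕ) :
    -(m * δ x m r) ≤ bkpt δ x (-m) r := by
  rw [neg_natCast, neg_le_neg_iff]
  calc ∑ j ∈ range m, δ x j r ≤ ∑ _j ∈ range m, δ x m r :=
        sum_le_sum fun j hj => hmono (mem_range.mp hj).le
    _ = m * δ x m r := by simp

lemma interp_eq_of_le_neg {n : ℕ} {c : ℝ} (hpos : ∀ t, 0 < δ x t r)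
    (hconst : ∀ t, n ≤ t → δ x t r = c) {v : ℝ} (hv : v ≤ bkpt δ x (-n) r) {i : ℤ}
    (hi : bkpt δ x i r ≤ v) :
    (v - bkpt δ x i r) / (bkpt δ x (i + 1) r - bkpt δ x i r) + i =
      (v - bkpt δ x (-n) r) / c - n := by
  rw [interp_eq_of_affine_tail (b := fun i => bkpt δ x i r) (c := c) (strictMono hpos)
    (fun i hi => by rw [eq_of_le_neg hconst hi]; push_cast; ring) hv hi]
  push_cast
  ring

end bkpt

theorem shifted_weights_stabilize_general {D R : Type*} [DecidableEq D]
    [Fintype R] {n : ℕ}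
    (ε Δu : ℝ) (hΔ : 0 < Δu)
    (u : (Fin n → D) → R → ℝ) (δ : (Fin n → D) → ℕ → R → ℝ)
    (hadm : Admissible u δ) (hpos : ∀ x t r, 0 < δ x t r)
    (hbounded : ∀ (x : Fin n → D) (t : ℕ) (r : R), n ≤ t → δ x t r = Δu)
    (Df : ℝ → (Fin n → D) → R → ℝ)
    (hDf : ∀ (s : ℝ) (x : Fin n → D) (r : R), ∃ i : ℤ,
      bkpt δ x i r ≤ u x r - s ∧ u x r - s < bkpt δ x (i + 1) r ∧
      Df s x r = (u x r - s - bkpt δ x i r) / (bkpt δ x (i + 1) r - bkpt δ x i r) + i) :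
    ∀ (x : Fin n → D) (r : R),
      (∀ s : ℝ, (n : ℝ) * Δu + (⨆ r' : R, u x r') ≤ s →
        Real.exp (ε * Df s x r / 2) / ∑ r' : R, Real.exp (ε * Df s x r' / 2) =
        Real.exp (ε * Df ((n : ℝ) * Δu + ⨆ r' : R, u x r') x r / 2) /
          ∑ r' : R, Real.exp (ε * Df ((n : ℝ) * Δu + ⨆ r' : R, u x r') x r' / 2)) ∧
      Tendsto
        (fun s : ℝ =>
          Real.exp (ε * Df s x r / 2) / ∑ r' : R, Real.exp (ε * Df s x r' / 2))
        atTop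
        (𝓝 (Real.exp (ε * Df ((n : ℝ) * Δu + ⨆ r' : R, u x r') x r / 2) /
          ∑ r' : R, Real.exp (ε * Df ((n : ℝ) * Δu + ⨆ r' : R, u x r') x r' / 2))) := by
  intro x r
  set s₀ := (n : ℝ) * Δu + ⨆ r' : R, u x r'
  have hDf_affine : ∀ s, s₀ ≤ s → ∀ r',
      Df s x r' = (u x r' - s - bkpt δ x (-n) r') / Δu - n := by
    intro s hs r'
    obtain ⟨i, hi, -, hDfi⟩ := hDf s x r'
    rw [hDfi]
    refine bkpt.interp_eq_of_le_neg (hpos x · r') (hbounded x · r') ?_ hi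
    have hu : u x r' ≤ ⨆ r'' : R, u x r'' := le_ciSup (Set.finite_range _).bddAbove r'
    have hb := bkpt.neg_mul_le_neg_natCast (hadm.monotone x r') n
    rw [hbounded x n r' le_rfl] at hb
    linarith
  have hshift : ∀ s, s₀ ≤ s → ∀ r',
      ε * Df s x r' / 2 = ε * Df s₀ x r' / 2 + ε * ((s₀ - s) / Δu) / 2 := by
    intro s hs r'
    rw [hDf_affine s hs, hDf_affine s₀ le_rfl]
    field_simp
    ring
  have hstable : ∀ s, s₀ ≤ s →
      Real.exp (ε * Df s x r / 2) / ∑ r' : R, Real.exp (ε * Df s x r' / 2) =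
        Real.exp (ε * Df s₀ x r / 2) / ∑ r' : R, Real.exp (ε * Df s₀ x r' / 2) := by
    intro s hs
    simp only [hshift s hs]
    exact exp_add_div_sum_exp_add (fun r' => ε * Df s₀ x r' / 2) _ r
  exact ⟨hstable, tendsto_const_nhds.congr'
    ((eventually_ge_atTop s₀).mono fun s hs => (hstable s hs).symm)⟩

/-- For an admissible, positive and bounded sensitivity function, the normalized
exponential weights of the dampened shifted utility `u − s` coincide for all shifts
`s ≥ s₀ = n·Δu + max_{r'} u(x,r')`; consequently the limit as `s → ∞` exists and
equals the value at `s₀`. -/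
theorem shifted_weights_stabilize {D R : Type*} [Fintype D] [DecidableEq D]
    [Fintype R] [Nonempty R] {n : ℕ}
    (ε Δu : ℝ) (hΔ : 0 < Δu)
    (u : (Fin n → D) → R → ℝ) (δ : (Fin n → D) → ℕ → R → ℝ)
    (hadm : Admissible u δ) (hpos : ∀ x t r, 0 < δ x t r)
    (hbounded : ∀ (x : Fin n → D) (t : ℕ) (r : R), n ≤ t → δ x t r = Δu)
    (Df : ℝ → (Fin n → D) → R → ℝ)
    (hDf : ∀ (s : ℝ) (x : Fin n → D) (r : R), ∃ i : ℤ,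
      bkpt δ x i r ≤ u x r - s ∧ u x r - s < bkpt δ x (i + 1) r ∧
      Df s x r = (u x r - s - bkpt δ x i r) / (bkpt δ x (i + 1) r - bkpt δ x i r) + i) :
    ∀ (x : Fin n → D) (r : R),
      (∀ s : ℝ, (n : ℝ) * Δu + (⨆ r' : R, u x r') ≤ s →
        Real.exp (ε * Df s x r / 2) / ∑ r' : R, Real.exp (ε * Df s x r' / 2) =
        Real.exp (ε * Df ((n : ℝ) * Δu + ⨆ r' : R, u x r') x r / 2) /
          ∑ r' : R, Real.exp (ε * Df ((n : ℝ) * Δu + ⨆ r' : R, u x r') x r' / 2)) ∧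
      Tendsto
        (fun s : ℝ =>
          Real.exp (ε * Df s x r / 2) / ∑ r' : R, Real.exp (ε * Df s x r' / 2))
        atTop
        (𝓝 (Real.exp (ε * Df ((n : ℝ) * Δu + ⨆ r' : R, u x r') x r / 2) /
          ∑ r' : R, Real.exp (ε * Df ((n : ℝ) * Δu + ⨆ r' : R, u x r') x r' / 2))) :=
  shifted_weights_stabilize_general ε Δu hΔ u δ hadm hpos hbounded Df hDf
end

section
/- Element local sensitivity of information gain at distance 0: for a dataset T with attribute A (values j ∈ A) and class attribute C (values c ∈ C), let the utility be IG(T, A) = −Σ_{j∈A} Σ_{c∈C} τ^A_{j,c} · log₂(τ^A_{j,c}/τ^A_j), where τ^A_j counts records with attribute value j and τ^A_{j,c} counts records with attribute value j and class value c. Then the maximum of |IG(T,A) − IG(T',A)| over all datasets T' obtained from T by adding or removing a single record equals max_{j∈A, c∈C} max( f(τ^A_j) − f(τ^A_{j,c}), g(τ^A_{j,c}) − g(τ^A_j) ), where f(x) = x·log₂((x+1)/x) + log₂(x+1) (f(x)=0 for x ≤ 0) and g(x) = x·log₂((x−1)/x) − log₂(x−1) (g(x)=0 for x ≤ 1). 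-/
/-- Number of records of `T` with attribute value `j`. -/
noncomputable def tauJ {ρ A : Type*} [DecidableEq A] (attA : ρ → A)
    (T : Multiset ρ) (j : A) : ℕ :=
  (T.filter fun r => attA r = j).card

/-- Number of records of `T` with attribute value `j` and class value `c`. -/
noncomputable def tauJC {ρ A C : Type*} [DecidableEq A] [DecidableEq C]
    (attA : ρ → A) (attC : ρ → C) (T : Multiset ρ) (j : A) (c : C) : ℕ :=
  (T.filter fun r => attA r = j ∧ attC r = c).card

/-- The (simplified) information gain utility
`IG(T,A) = −Σ_{j∈A} Σ_{c∈C} τ^A_{j,c} · log₂(τ^A_{j,c}/τ^A_j)`. -/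
noncomputable def IG {ρ A C : Type*} [Fintype A] [Fintype C] [DecidableEq A]
    [DecidableEq C] (attA : ρ → A) (attC : ρ → C) (T : Multiset ρ) : ℝ :=
  -∑ j : A, ∑ c : C, (tauJC attA attC T j c : ℝ) *
    Real.logb 2 ((tauJC attA attC T j c : ℝ) / (tauJ attA T j : ℝ))

/-- `g(x) = x·log₂((x−1)/x) − log₂(x−1)`, with `g(x) = 0` for `x ≤ 1`. -/
noncomputable def gfun (x : ℕ) : ℝ :=
  if x ≤ 1 then 0
  else (x : ℝ) * Real.logb 2 (((x : ℝ) - 1) / (x : ℝ)) - Real.logb 2 ((x : ℝ) - 1)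

/-- `f(x) = x·log₂((x+1)/x) + log₂(x+1)`, with `f(0) = 0`. -/
noncomputable def ffun (x : ℕ) : ℝ :=
  if x = 0 then 0
  else (x : ℝ) * Real.logb 2 (((x : ℝ) + 1) / (x : ℝ)) + Real.logb 2 ((x : ℝ) + 1)

/-! With `negMulLog x = -x log x`, the information gain is
`IG(T) = (Σ_{j,c} negMulLog τ_{j,c} - Σ_j negMulLog τ_j) / log 2`, while
`f(n) = (negMulLog n - negMulLog (n + 1)) / log 2` and `g(n) = -f(n - 1)`.
Adding a record of type `(j, c)` raises only `τ_j` and `τ_{j,c}`, by one each, so it changes `IG`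
by exactly `f(τ_j) - f(τ_{j,c})`, which is nonnegative since concavity of `negMulLog` makes `f`
monotone; removing one changes it by `f(τ_j - 1) - f(τ_{j,c} - 1) = g(τ_{j,c}) - g(τ_j)`.
Every type `(j, c)` can be added, and when none can be removed (`τ_{j,c} = 0`) the `g`-term is
dominated by the `f`-term. -/

open Real

theorem ConcaveOn.antitone_natCast_add_one_sub {φ : ℝ → ℝ}
    (hφ : ConcaveOn ℝ (Set.Ici 0) φ) : Antitone fun n : ℕ => φ (n + 1) - φ n := by
  refine antitone_nat_of_succ_le fun n => ?_
  have h := hφ.slope_anti_adjacent (x := n) (y := n + 1) (z := n + 2)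
    (Set.mem_Ici.2 (by positivity)) (Set.mem_Ici.2 (by positivity)) (by linarith) (by linarith)
  push_cast
  convert h using 1 <;> ring_nf

theorem ffun_eq_negMulLog (n : ℕ) :
    ffun n = (negMulLog n - negMulLog (n + 1)) / log 2 := by
  rcases Nat.eq_zero_or_pos n with rfl | hn
  · simp [ffun]
  · have hn : (0 : ℝ) < n := by exact_mod_cast hn
    rw [ffun, if_neg (by positivity), logb_div (by positivity) hn.ne']
    simp only [logb, negMulLog]
    ring

theorem ffun_mono : Monotone ffun := fun m n hmn => by
  simp only [ffun_eq_negMulLog]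
  have := concaveOn_negMulLog.antitone_natCast_add_one_sub hmn
  exact div_le_div_of_nonneg_right (by linarith) (log_pos one_lt_two).le

-- At `n = 0` the truncated `n - 1` is `0`, and both sides vanish.
theorem gfun_eq_neg_ffun_sub_one (n : ℕ) : gfun n = -ffun (n - 1) := by
  rcases n with _ | _ | n
  · simp [gfun, ffun]
  · simp [gfun, ffun]
  · rw [gfun, if_neg (by omega), ffun_eq_negMulLog, Nat.add_sub_cancel]
    push_cast
    rw [show (n : ℝ) + 1 + 1 - 1 = n + 1 by ring, logb_div (by positivity) (by positivity)]
    simp only [logb, negMulLog]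
    ring

theorem Fintype.sum_apply_add_ite_eq {ι M G : Type*} [Fintype ι] [DecidableEq ι]
    [AddZeroClass M] [AddCommGroup G] (φ : M → G) (a : ι → M) (i₀ : ι) (m : M) :
    ∑ i, φ (a i + if i₀ = i then m else 0) = ∑ i, φ (a i) + (φ (a i₀ + m) - φ (a i₀)) := by
  rw [← sub_eq_iff_eq_add', ← Finset.sum_sub_distrib,
    Fintype.sum_eq_single i₀ fun i hi => by simp [Ne.symm hi]]
  simp

theorem mul_logb_div_eq_neg_negMulLog_add {b x y : ℝ} (hxy : y = 0 → x = 0) :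
    x * logb b (x / y) = -(negMulLog x + x * log y) / log b := by
  by_cases hx : x = 0
  · simp [hx]
  · rw [logb, log_div hx fun hy => hx (hxy hy), negMulLog]
    ring

section Counting

variable {ρ A C : Type*} [DecidableEq A] [DecidableEq C] (attA : ρ → A) (attC : ρ → C)

theorem tauJ_cons (r : ρ) (T : Multiset ρ) (j : A) :
    tauJ attA (r ::ₘ T) j = tauJ attA T j + if attA r = j then 1 else 0 := by
  unfold tauJ
  rw [Multiset.filter_cons, Multiset.card_add]
  split <;> simp [add_comm]

theorem tauJC_cons (r : ρ) (T : Multiset ρ) (j : A) (c : C) :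
    tauJC attA attC (r ::ₘ T) j c
      = tauJC attA attC T j c + if attA r = j ∧ attC r = c then 1 else 0 := by
  unfold tauJC
  rw [Multiset.filter_cons, Multiset.card_add]
  split <;> simp [add_comm]

theorem tauJC_le_tauJ (T : Multiset ρ) (j : A) (c : C) :
    tauJC attA attC T j c ≤ tauJ attA T j :=
  Multiset.card_le_card <| Multiset.monotone_filter_right _ fun _ hr => hr.1

theorem sum_tauJC [Fintype C] (T : Multiset ρ) (j : A) :
    ∑ c, tauJC attA attC T j c = tauJ attA T j := by
  induction T using Multiset.induction_on with
  | empty => simp [tauJC, tauJ]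
  | cons r T ih =>
    simp only [tauJC_cons, tauJ_cons, Finset.sum_add_distrib, ih, add_right_inj]
    by_cases h : attA r = j <;> simp [h]

theorem IG_eq_negMulLog [Fintype A] [Fintype C] (T : Multiset ρ) :
    IG attA attC T = (∑ p : A × C, negMulLog (tauJC attA attC T p.1 p.2)
      - ∑ j, negMulLog (tauJ attA T j)) / log 2 := by
  have hterm (j : A) (c : C) := mul_logb_div_eq_neg_negMulLog_add (b := 2)
    (x := tauJC attA attC T j c) (y := tauJ attA T j) fun h => by
      have := tauJC_le_tauJ attA attC T j c
      norm_cast at h ⊢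
      omega
  have hsum (j : A) : ∑ c, (tauJC attA attC T j c : ℝ) = tauJ attA T j := by
    exact_mod_cast sum_tauJC attA attC T j
  simp only [IG, hterm, ← Finset.sum_div, Finset.sum_add_distrib, ← Finset.sum_mul, hsum,
    Fintype.sum_prod_type, negMulLog, neg_mul, Finset.sum_neg_distrib, neg_div]
  ring

theorem IG_cons_sub [Fintype A] [Fintype C] (r : ρ) (T : Multiset ρ) :
    IG attA attC (r ::ₘ T) - IG attA attC T
      = ffun (tauJ attA T (attA r)) - ffun (tauJC attA attC T (attA r) (attC r)) := by
  have hpair (p : A × C) : (attA r = p.1 ∧ attC r = p.2) ↔ (attA r, attC r) = p := by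
    simp [Prod.ext_iff]
  simp only [IG_eq_negMulLog, tauJ_cons, tauJC_cons, hpair, ffun_eq_negMulLog]
  rw [Fintype.sum_apply_add_ite_eq (fun n : ℕ => negMulLog n),
    Fintype.sum_apply_add_ite_eq (fun n : ℕ => negMulLog n)]
  push_cast
  ring

end Counting

theorem ciSup_eq_ciSup_of_forall_exists_le {α ι κ : Type*} [ConditionallyCompleteLattice α]
    {f : ι → α} {g : κ → α} (hg : BddAbove (Set.range g)) (hfg : ∀ i, ∃ k, f i ≤ g k)
    (hgf : ∀ k, ∃ i, g k ≤ f i) : ⨆ i, f i = ⨆ k, g k := by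
  rcases isEmpty_or_nonempty ι with hι | hι
  · have : IsEmpty κ := ⟨fun k => isEmptyElim (hgf k).choose⟩
    simp only [iSup_of_empty']
  · have : Nonempty κ := ⟨(hfg hι.some).choose⟩
    obtain ⟨b, hb⟩ := hg
    have hf : BddAbove (Set.range f) := ⟨b, Set.forall_mem_range.2 fun i =>
      let ⟨k, hk⟩ := hfg i; hk.trans (hb ⟨k, rfl⟩)⟩
    exact le_antisymm (ciSup_mono_of_forall_exists ⟨b, hb⟩ hfg) (ciSup_mono_of_forall_exists hf hgf)

theorem gfun_zero_sub_le (n : ℕ) : gfun 0 - gfun n ≤ ffun n - ffun 0 := by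
  simp only [gfun_eq_neg_ffun_sub_one, Nat.zero_sub]
  linarith [ffun_mono (n.sub_le 1)]

section Sensitivity

variable {ρ A C : Type*} [Fintype A] [Fintype C] [DecidableEq A] [DecidableEq C]
  (attA : ρ → A) (attC : ρ → C)

theorem abs_IG_sub_IG_cons (r : ρ) (T : Multiset ρ) :
    |IG attA attC T - IG attA attC (r ::ₘ T)|
      = ffun (tauJ attA T (attA r)) - ffun (tauJC attA attC T (attA r) (attC r)) := by
  rw [abs_sub_comm, IG_cons_sub,
    abs_of_nonneg (sub_nonneg.2 (ffun_mono (tauJC_le_tauJ attA attC T _ _)))]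

theorem abs_IG_sub_IG_erase [DecidableEq ρ] {r : ρ} {T : Multiset ρ} (hr : r ∈ T) :
    |IG attA attC T - IG attA attC (T.erase r)|
      = gfun (tauJC attA attC T (attA r) (attC r)) - gfun (tauJ attA T (attA r)) := by
  obtain ⟨T, rfl⟩ := Multiset.exists_cons_of_mem hr
  rw [Multiset.erase_cons_head, abs_sub_comm, abs_IG_sub_IG_cons, gfun_eq_neg_ffun_sub_one,
    gfun_eq_neg_ffun_sub_one, tauJ_cons, tauJC_cons]
  simp only [and_self, if_true, Nat.add_sub_cancel]
  ring

variable [DecidableEq ρ]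

theorem exists_abs_IG_sub_le {T T' : Multiset ρ}
    (hT' : (∃ r, T' = r ::ₘ T) ∨ ∃ r ∈ T, T' = T.erase r) :
    ∃ j c, |IG attA attC T - IG attA attC T'|
      ≤ max (ffun (tauJ attA T j) - ffun (tauJC attA attC T j c))
          (gfun (tauJC attA attC T j c) - gfun (tauJ attA T j)) := by
  rcases hT' with ⟨r, rfl⟩ | ⟨r, hr, rfl⟩
  · exact ⟨attA r, attC r, (abs_IG_sub_IG_cons attA attC r T).trans_le (le_max_left _ _)⟩
  · exact ⟨attA r, attC r, (abs_IG_sub_IG_erase attA attC hr).trans_le (le_max_right _ _)⟩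

theorem exists_le_abs_IG_sub (hsurj : ∀ j c, ∃ r, attA r = j ∧ attC r = c) (T : Multiset ρ)
    (j : A) (c : C) :
    ∃ T', ((∃ r, T' = r ::ₘ T) ∨ ∃ r ∈ T, T' = T.erase r) ∧
      max (ffun (tauJ attA T j) - ffun (tauJC attA attC T j c))
          (gfun (tauJC attA attC T j c) - gfun (tauJ attA T j))
        ≤ |IG attA attC T - IG attA attC T'| := by
  obtain ⟨r, rfl, rfl⟩ := hsurj j c
  have hcons := (abs_IG_sub_IG_cons attA attC r T).ge
  rcases Nat.eq_zero_or_pos (tauJC attA attC T (attA r) (attC r)) with h0 | hpos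
  · exact ⟨r ::ₘ T, .inl ⟨r, rfl⟩, max_le hcons ((h0 ▸ gfun_zero_sub_le _).trans (h0 ▸ hcons))⟩
  obtain ⟨s, hs⟩ := Multiset.card_pos_iff_exists_mem.1 hpos
  obtain ⟨hsT, hsA, hsC⟩ := Multiset.mem_filter.1 hs
  have herase := (abs_IG_sub_IG_erase attA attC hsT).ge
  rw [hsA, hsC] at herase
  rcases max_choice (ffun (tauJ attA T (attA r)) - ffun (tauJC attA attC T (attA r) (attC r)))
    (gfun (tauJC attA attC T (attA r) (attC r)) - gfun (tauJ attA T (attA r))) with h | h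
  · exact ⟨r ::ₘ T, .inl ⟨r, rfl⟩, h.le.trans hcons⟩
  · exact ⟨T.erase s, .inr ⟨s, hsT, rfl⟩, h.le.trans herase⟩

end Sensitivity

theorem ig_element_local_sensitivity_zero_general {ρ A C : Type*} [DecidableEq ρ]
    [Fintype A] [Fintype C] [DecidableEq A] [DecidableEq C]
    (attA : ρ → A) (attC : ρ → C)
    (hsurj : ∀ (j : A) (c : C), ∃ r : ρ, attA r = j ∧ attC r = c)
    (T : Multiset ρ) :
    (⨆ T' : {T' : Multiset ρ //
        (∃ r : ρ, T' = r ::ₘ T) ∨ (∃ r ∈ T, T' = T.erase r)},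
      |IG attA attC T - IG attA attC T'.1|) =
    ⨆ j : A, ⨆ c : C,
      max (ffun (tauJ attA T j) - ffun (tauJC attA attC T j c))
          (gfun (tauJC attA attC T j c) - gfun (tauJ attA T j)) := by
  refine (ciSup_eq_ciSup_of_forall_exists_le (g := fun p : A × C =>
      max (ffun (tauJ attA T p.1) - ffun (tauJC attA attC T p.1 p.2))
        (gfun (tauJC attA attC T p.1 p.2) - gfun (tauJ attA T p.1)))
    (Finite.bddAbove_range _) (fun T' => ?_) (fun p => ?_)).trans
    (ciSup_prod (Finite.bddAbove_range _))
  · obtain ⟨j, c, h⟩ := exists_abs_IG_sub_le attA attC T'.2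
    exact ⟨(j, c), h⟩
  · obtain ⟨T', hT', h⟩ := exists_le_abs_IG_sub attA attC hsurj T p.1 p.2
    exact ⟨⟨T', hT'⟩, h⟩

/-- Element local sensitivity of information gain at distance 0: the maximum change of
`IG` under the addition or removal of a single record equals
`max_{j,c} max(f(τ^A_j) − f(τ^A_{j,c}), g(τ^A_{j,c}) − g(τ^A_j))`. -/
theorem ig_element_local_sensitivity_zero {ρ A C : Type*} [DecidableEq ρ]
    [Fintype A] [Fintype C] [Nonempty A] [Nonempty C] [DecidableEq A] [DecidableEq C]
    (attA : ρ → A) (attC : ρ → C)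
    (hsurj : ∀ (j : A) (c : C), ∃ r : ρ, attA r = j ∧ attC r = c)
    (T : Multiset ρ) :
    (⨆ T' : {T' : Multiset ρ //
        (∃ r : ρ, T' = r ::ₘ T) ∨ (∃ r ∈ T, T' = T.erase r)},
      |IG attA attC T - IG attA attC T'.1|) =
    ⨆ j : A, ⨆ c : C,
      max (ffun (tauJ attA T j) - ffun (tauJC attA attC T j c))
          (gfun (tauJC attA attC T j c) - gfun (tauJ attA T j)) :=
  ig_element_local_sensitivity_zero_general attA attC hsurj T
end

section
/- Dominance implies stochastic error domination for softmax-style mechanisms: let R = {r_1,...,r_q} be ordered so that u(x,r_1) ≥ ... ≥ u(x,r_q), and suppose two score functions F, F̄ : R → ℝ satisfy F(r) − F(r̄) ≥ F̄(r) − F̄(r̄) whenever u(x,r) ≥ u(x,r̄) (i.e., F spreads high-utility elements at least as much apart as F̄ does). Let M and M̄ output r with probability proportional to exp(ε F(r)/2) and exp(ε F̄(r)/2) respectively, and define the error E(M) = u* − u(x, M(x)) with u* = max_r u(x,r). Then for every threshold θ ≥ 0, Pr[E(M) ≥ θ] ≤ Pr[E(M̄) ≥ θ], and consequently 𝔼[E(M)]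 ≤ 𝔼[E(M̄)]. -/
/-!
Both claims compare the expectation of some `g : R → ℝ` that is antitone in the utility `u`
(the indicator of `{θ ≤ u* - u r}`, resp. the error `u* - u r`) under the weights
`a = exp (ε F / 2)` and `b = exp (ε F̄ / 2)`. The dominance hypothesis says exactly that
`a / b` is monotone in `u`, i.e. `a r * b r' ≤ b r * a r'` whenever `u r ≤ u r'`. After
cross-multiplying, the difference of the two expectations is, up to a factor `2`, the
symmetrized double sum `∑ r r', (g r - g r') * (a r * b r' - b r * a r')`, whose terms are
all nonpositive.
-/

open Finset

section WeightedSums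

variable {ι : Type*} [Fintype ι]

theorem two_mul_sum_mul_sum_sub_eq_sum_sum (g a b : ι → ℝ) :
    2 * ((∑ i, g i * a i) * ∑ j, b j - (∑ i, g i * b i) * ∑ j, a j) =
      ∑ i, ∑ j, (g i - g j) * (a i * b j - b i * a j) := by
  have hswap : ∑ i, ∑ j, g j * (a i * b j - b i * a j) =
      -∑ i, ∑ j, g i * (a i * b j - b i * a j) := by
    rw [sum_comm, ← sum_neg_distrib]
    exact sum_congr rfl fun _ _ => by rw [← sum_neg_distrib]; congr 1; ext; ring
  have hexpand : ∑ i, ∑ j, g i * (a i * b j - b i * a j) =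
      (∑ i, g i * a i) * ∑ j, b j - (∑ i, g i * b i) * ∑ j, a j := by
    simp only [sum_mul_sum, ← sum_sub_distrib, mul_sub, mul_assoc]
  simp only [sub_mul, sum_sub_distrib, hswap, hexpand]
  ring

theorem sum_mul_div_sum_le_of_cross_le (u g a b : ι → ℝ)
    (ha : 0 < ∑ i, a i) (hb : 0 < ∑ i, b i)
    (hab : ∀ i j, u i ≤ u j → a i * b j ≤ b i * a j)
    (hg : ∀ i j, u i ≤ u j → g j ≤ g i) :
    ∑ i, g i * (a i / ∑ j, a j) ≤ ∑ i, g i * (b i / ∑ j, b j) := by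
  simp only [← mul_div_assoc, ← sum_div]
  rw [div_le_div_iff₀ ha hb]
  have hterm : ∀ i j, (g i - g j) * (a i * b j - b i * a j) ≤ 0 := by
    intro i j
    rcases le_total (u i) (u j) with h | h
    · exact mul_nonpos_of_nonneg_of_nonpos (sub_nonneg.2 (hg i j h)) (sub_nonpos.2 (hab i j h))
    · exact mul_nonpos_of_nonpos_of_nonneg (sub_nonpos.2 (hg j i h)) (by linarith [hab j i h])
  have hsum : ∑ i, ∑ j, (g i - g j) * (a i * b j - b i * a j) ≤ 0 :=
    sum_nonpos fun i _ => sum_nonpos fun j _ => hterm i j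
  linarith [two_mul_sum_mul_sum_sub_eq_sum_sum g a b]

end WeightedSums

theorem exp_mul_exp_le_of_sub_le {ε : ℝ} (hε : 0 ≤ ε) {x x' y y' : ℝ} (h : y' - y ≤ x' - x) :
    Real.exp (ε * x / 2) * Real.exp (ε * y' / 2) ≤
      Real.exp (ε * y / 2) * Real.exp (ε * x' / 2) := by
  rw [← Real.exp_add, ← Real.exp_add, Real.exp_le_exp]
  nlinarith

/-- Dominance implies stochastic error domination for softmax-style mechanisms: if `F`
spreads high-utility elements at least as much apart as `F̄`, then the softmax
mechanism for `F` stochastically dominates that for `F̄` in terms of the error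
`E = u* − u(M(x))`, and in particular has smaller expected error. -/
theorem dominance_error_domination {R : Type*} [Fintype R] [Nonempty R]
    (ε : ℝ) (hε : 0 < ε) (u F Fbar : R → ℝ)
    (hdom : ∀ r r' : R, u r' ≤ u r → Fbar r - Fbar r' ≤ F r - F r') :
    (∀ θ : ℝ, 0 ≤ θ →
      (∑ r ∈ Finset.univ.filter fun r => θ ≤ (⨆ r'' : R, u r'') - u r,
        Real.exp (ε * F r / 2) / ∑ r' : R, Real.exp (ε * F r' / 2)) ≤
      ∑ r ∈ Finset.univ.filter fun r => θ ≤ (⨆ r'' : R, u r'') - u r,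
        Real.exp (ε * Fbar r / 2) / ∑ r' : R, Real.exp (ε * Fbar r' / 2)) ∧
    (∑ r : R, ((⨆ r'' : R, u r'') - u r) *
        (Real.exp (ε * F r / 2) / ∑ r' : R, Real.exp (ε * F r' / 2))) ≤
      ∑ r : R, ((⨆ r'' : R, u r'') - u r) *
        (Real.exp (ε * Fbar r / 2) / ∑ r' : R, Real.exp (ε * Fbar r' / 2)) := by
  have hpos (G : R → ℝ) : 0 < ∑ r, Real.exp (ε * G r / 2) :=
    sum_pos (fun _ _ => Real.exp_pos _) univ_nonempty
  have hexpect (g : R → ℝ) (hg : ∀ r r', u r ≤ u r' → g r' ≤ g r) :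
      ∑ r, g r * (Real.exp (ε * F r / 2) / ∑ r', Real.exp (ε * F r' / 2)) ≤
        ∑ r, g r * (Real.exp (ε * Fbar r / 2) / ∑ r', Real.exp (ε * Fbar r' / 2)) :=
    sum_mul_div_sum_le_of_cross_le u g _ _ (hpos F) (hpos Fbar)
      (fun r r' h => exp_mul_exp_le_of_sub_le hε.le (hdom r' r h)) hg
  refine ⟨fun θ _ => ?_, hexpect _ fun r r' h => by linarith⟩
  have htail := hexpect (fun r => if θ ≤ (⨆ r'', u r'') - u r then 1 else 0)
    fun r r' h => by split_ifs with hr' hr <;> norm_num; exact hr (by linarith)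
  simpa only [boole_mul, ← sum_filter] using htail
end
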